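/- arXiv:2404.07190 — 2 statements merged into one kernel-verified Lean document; each statement's English description precedes it below -/
import Mathlib

section
/- Let n ≥ 2, 0 < ε < 1 and s ≥ λ ≥ 1. Let G be an n-vertex (ε,s)-expander and let U ⊆ V(G) have size |U| ≤ 2n/3. Then there is a set U' ⊆ U with |N_G(U')| ≥ λ·|U'| and |U'| ≥ ε·|U|/(3λ·(log n)^2). -/
/-- The external neighbourhood of a vertex set `U` in a graph `G`. -/
def extNbhd {α : Type*} (G : SimpleGraph α) (U : Set α) : Set α :=
  {v | v ∉ U ∧ ∃ u ∈ U, G.Adj u v}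

/-- `G`, regarded as an `n`-vertex graph, is an `(ε, s)`-expander. -/
def IsExpander {α : Type*} (n : ℕ) (G : SimpleGraph α) (ε s : ℝ) : Prop :=
  ∀ (U : Set α) (F : Set (Sym2 α)), F ⊆ G.edgeSet →
    1 ≤ U.ncard → (U.ncard : ℝ) ≤ 2 / 3 * n → (F.ncard : ℝ) ≤ s * U.ncard →
    ε * U.ncard / Real.logb 2 n ^ 2 ≤ ((extNbhd (G.deleteEdges F) U).ncard : ℝ)

/-- In an `(ε,s)`-expander, every set `U` with `|U| ≤ 2n/3` contains a well-expanding
subset `U'` with `|N_G(U')| ≥ λ|U'|` and `|U'| ≥ ε|U|/(3λ(log n)²)`. -/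
theorem statement15 (n : ℕ) (hn : 2 ≤ n) (ε s lam : ℝ)
    (hε0 : 0 < ε) (hε1 : ε < 1) (hlam : 1 ≤ lam) (hls : lam ≤ s)
    (G : SimpleGraph (Fin n)) (hG : IsExpander n G ε s)
    (U : Set (Fin n)) (hU : (U.ncard : ℝ) ≤ 2 / 3 * n) :
    ∃ U' ⊆ U, lam * U'.ncard ≤ ((extNbhd G U').ncard : ℝ) ∧
      ε * U.ncard / (3 * lam * Real.logb 2 n ^ 2) ≤ (U'.ncard : ℝ) := by
  classical
  set L : ℝ := Real.logb 2 n ^ 2 with hLdef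
  have hL1 : (1:ℝ) ≤ L := by
    have h1 : (1:ℝ) ≤ Real.logb 2 n := by
      have := Real.logb_le_logb_of_le (b := 2) (by norm_num) (by norm_num)
        (by exact_mod_cast hn : (2:ℝ) ≤ n)
      simpa [Real.logb_self_eq_one] using this
    nlinarith
  have hL0 : (0:ℝ) < L := by linarith
  have hlam0 : (0:ℝ) < lam := by linarith
  by_cases hp0 : U.ncard = 0
  · refine ⟨∅, by simp, ?_, ?_⟩ <;> simp [extNbhd, hp0]
  have hp : 1 ≤ U.ncard := Nat.one_le_iff_ne_zero.mpr hp0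
  have hpR : (1:ℝ) ≤ U.ncard := by exact_mod_cast hp
  have hppos : (0:ℝ) < U.ncard := by linarith
  have hUfin : U.Finite := Set.toFinite U
  set UF : Finset (Fin n) := hUfin.toFinset with hUFdef
  have hUFcoe : (↑UF : Set (Fin n)) = U := hUfin.coe_toFinset
  have hUFcard : UF.card = U.ncard := (Set.ncard_eq_toFinset_card U hUfin).symm
  set ψ : Finset (Fin n) → ℝ :=
    fun S => ((extNbhd G ↑S \ U).ncard : ℝ) - lam * S.card with hψdef
  set P := UF.powerset with hPdef
  have hPne : P.Nonempty := ⟨∅, Finset.empty_mem_powerset _⟩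
  obtain ⟨S₀, hS₀P, hS₀max⟩ := P.exists_max_image ψ hPne
  set Q := P.filter (fun S => ψ S₀ ≤ ψ S) with hQdef
  have hQne : Q.Nonempty := ⟨S₀, Finset.mem_filter.mpr ⟨hS₀P, le_refl _⟩⟩
  obtain ⟨S', hS'Q, hS'card⟩ := Q.exists_max_image (fun S => S.card) hQne
  obtain ⟨hS'P, hψ₀⟩ := Finset.mem_filter.mp hS'Q
  have hmax : ∀ S ∈ P, ψ S ≤ ψ S' := fun S hS => (hS₀max S hS).trans hψ₀
  have hcardmax : ∀ S ∈ P, ψ S' ≤ ψ S → S.card ≤ S'.card := by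
    intro S hS h
    exact hS'card S (Finset.mem_filter.mpr ⟨hS, hψ₀.trans h⟩)
  have hS'UF : S' ⊆ UF := Finset.mem_powerset.mp hS'P
  have hS'U : (↑S' : Set (Fin n)) ⊆ U := by
    rw [← hUFcoe]; exact_mod_cast hS'UF
  have hψ0 : (0:ℝ) ≤ ψ S' := by
    have h := hmax ∅ (Finset.empty_mem_powerset _)
    have he : ψ ∅ = 0 := by simp [hψdef, extNbhd]
    linarith
  set B := extNbhd G ↑S' \ U with hBdef
  have hBfin : B.Finite := Set.toFinite _
  have hgood : lam * S'.card ≤ (B.ncard : ℝ) := by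
    have h : ψ S' = (B.ncard : ℝ) - lam * S'.card := rfl
    linarith
  set A : Fin n → Set (Fin n) :=
    fun u => {w | G.Adj u w ∧ w ∉ U ∧ w ∉ extNbhd G ↑S'} with hAdef
  have key : ∀ u ∈ UF, u ∉ S' → ((A u).ncard : ℝ) ≤ lam := by
    intro u huU huS
    have huUs : u ∈ U := by rw [← hUFcoe]; exact_mod_cast huU
    set T := insert u S' with hTdef
    have hTP : T ∈ P := Finset.mem_powerset.mpr (Finset.insert_subset huU hS'UF)
    have hψT : ψ T < ψ S' := by
      rcases lt_or_ge (ψ T) (ψ S') with h | h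
      · exact h
      · exfalso
        have hc := hcardmax T hTP h
        rw [hTdef, Finset.card_insert_of_notMem huS] at hc; omega
    have hTcoe : (↑T : Set (Fin n)) = insert u (↑S' : Set (Fin n)) := by
      rw [hTdef]; exact Finset.coe_insert u S'
    have hsubset : B ∪ A u ⊆ extNbhd G ↑T \ U := by
      rintro v (hv | hv)
      · obtain ⟨⟨hvS, x, hxS, hadj⟩, hvU⟩ := hv
        refine ⟨⟨?_, x, ?_, hadj⟩, hvU⟩
        · rw [hTcoe]
          rintro (rfl | h)
          · exact hvU huUs
          · exact hvS h
        · rw [hTcoe]; exact Set.mem_insert_of_mem _ hxS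
      · obtain ⟨hadj, hvU, hvN⟩ := hv
        refine ⟨⟨?_, u, ?_, hadj⟩, hvU⟩
        · rw [hTcoe]
          rintro (rfl | h)
          · exact hvU huUs
          · exact hvU (hS'U h)
        · rw [hTcoe]; exact Set.mem_insert _ _
    have hdisj : Disjoint B (A u) := by
      rw [Set.disjoint_left]
      rintro v ⟨hvN, hvU⟩ ⟨_, _, hvN'⟩
      exact hvN' hvN
    have hcard1 : (B ∪ A u).ncard = B.ncard + (A u).ncard := Set.ncard_union_eq hdisj
    have hcard2 : (B ∪ A u).ncard ≤ (extNbhd G ↑T \ U).ncard :=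
      Set.ncard_le_ncard hsubset (Set.toFinite _)
    have hψTexp : ((extNbhd G ↑T \ U).ncard : ℝ) - lam * (S'.card + 1) <
        (B.ncard : ℝ) - lam * S'.card := by
      have h : ψ T = ((extNbhd G ↑T \ U).ncard : ℝ) - lam * T.card := rfl
      have hTc : T.card = S'.card + 1 := by
        rw [hTdef, Finset.card_insert_of_notMem huS]
      rw [h, hTc] at hψT
      push_cast at hψT ⊢
      have hS'psi : ψ S' = ((B.ncard : ℝ)) - lam * S'.card := rfl
      linarith
    have hle : (B.ncard : ℝ) + (A u).ncard ≤ ((extNbhd G ↑T \ U).ncard : ℝ) := by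
      exact_mod_cast hcard1 ▸ hcard2
    linarith
  set D := UF \ S' with hDdef
  set Ffin : Finset (Sym2 (Fin n)) :=
    D.biUnion (fun u => ((Set.toFinite (A u)).toFinset).image (fun w => s(u, w))) with hFfindef
  set F : Set (Sym2 (Fin n)) := ↑Ffin with hFdef
  have hFmem : ∀ e, e ∈ F ↔ ∃ u ∈ D, ∃ w ∈ A u, e = s(u, w) := by
    intro e
    rw [hFdef]
    simp only [Finset.coe_biUnion, Set.mem_iUnion, Finset.mem_coe, Finset.mem_image,
      Set.Finite.mem_toFinset, hFfindef, Finset.mem_biUnion]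
    constructor
    · rintro ⟨u, hu, w, hw, rfl⟩; exact ⟨u, hu, w, hw, rfl⟩
    · rintro ⟨u, hu, w, hw, rfl⟩; exact ⟨u, hu, w, hw, rfl⟩
  have hFsub : F ⊆ G.edgeSet := by
    intro e he
    obtain ⟨u, _, w, hw, rfl⟩ := (hFmem e).mp he
    exact hw.1
  have hFcard : (F.ncard : ℝ) ≤ s * U.ncard := by
    have h1 : F.ncard = Ffin.card := Set.ncard_coe_finset Ffin
    have h2 : Ffin.card ≤ ∑ u ∈ D, (A u).ncard := by
      refine le_trans Finset.card_biUnion_le (Finset.sum_le_sum ?_)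
      intro u _
      refine le_trans Finset.card_image_le ?_
      rw [Set.ncard_eq_toFinset_card (A u) (Set.toFinite _)]
    have h3 : (∑ u ∈ D, ((A u).ncard : ℝ)) ≤ ∑ _u ∈ D, lam := by
      refine Finset.sum_le_sum ?_
      intro u hu
      obtain ⟨huU, huS⟩ := Finset.mem_sdiff.mp hu
      exact key u huU huS
    have h4 : (D.card : ℝ) ≤ (U.ncard : ℝ) := by
      have h : D.card ≤ UF.card := Finset.card_le_card Finset.sdiff_subset
      rw [hUFcard] at h; exact_mod_cast h
    have h5 : (Ffin.card : ℝ) ≤ (D.card : ℝ) * lam := by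
      calc (Ffin.card : ℝ) ≤ ∑ u ∈ D, ((A u).ncard : ℝ) := by exact_mod_cast h2
        _ ≤ ∑ _u ∈ D, lam := h3
        _ = D.card * lam := by rw [Finset.sum_const, nsmul_eq_mul]
    rw [h1]
    calc (Ffin.card : ℝ) ≤ D.card * lam := h5
      _ ≤ U.ncard * lam := by nlinarith
      _ ≤ s * U.ncard := by nlinarith
  have hexp := hG U F hFsub hp hU hFcard
  have hBexp : ε * (U.ncard : ℝ) / L ≤ (B.ncard : ℝ) := by
    rw [hLdef]
    refine le_trans hexp ?_
    have hsubN : extNbhd (G.deleteEdges F) U ⊆ B := by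
      rintro v ⟨hvU, x, hxU, hadj⟩
      rw [SimpleGraph.deleteEdges_adj] at hadj
      obtain ⟨hGadj, hnF⟩ := hadj
      by_cases hv : v ∈ extNbhd G ↑S'
      · exact ⟨hv, hvU⟩
      · exfalso
        by_cases hx : x ∈ S'
        · exact hv ⟨fun h => hvU (hS'U h), x, hx, hGadj⟩
        · refine hnF ((hFmem _).mpr ⟨x, ?_, v, ⟨hGadj, hvU, hv⟩, rfl⟩)
          rw [hDdef, Finset.mem_sdiff]
          refine ⟨?_, hx⟩
          rw [hUFdef, Set.Finite.mem_toFinset]; exact hxU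
    exact_mod_cast Set.ncard_le_ncard hsubN (Set.toFinite _)
  set t : ℝ := ε * (U.ncard : ℝ) / (3 * lam * L) with htdef
  have ht3 : ε * (U.ncard : ℝ) / L = 3 * lam * t := by
    rw [htdef]; field_simp
  have ht0 : 0 < t := by
    rw [htdef]
    exact div_pos (mul_pos hε0 hppos) (mul_pos (mul_pos (by norm_num) hlam0) hL0)
  rcases le_or_gt t (S'.card : ℝ) with hcase | hcase
  · refine ⟨↑S', hS'U, ?_, ?_⟩
    · rw [Set.ncard_coe_finset]
      refine le_trans hgood ?_
      exact_mod_cast Set.ncard_le_ncard Set.diff_subset (Set.toFinite _)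
    · rw [Set.ncard_coe_finset]; exact hcase
  · have hBpos : (0:ℝ) < (B.ncard : ℝ) :=
      lt_of_lt_of_le (div_pos (mul_pos hε0 hppos) hL0) hBexp
    have hBne : B.Nonempty := by
      rw [Set.nonempty_iff_ne_empty]
      intro h0
      rw [h0] at hBpos
      simp at hBpos
    obtain ⟨v, ⟨_, x, hxS, _⟩, _⟩ := hBne
    have hS'ne : 1 ≤ S'.card := Finset.card_pos.mpr ⟨x, hxS⟩
    have ht1 : 1 < t := lt_of_le_of_lt (by exact_mod_cast hS'ne) hcase
    set m := ⌈t⌉₊ with hmdef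
    have hmle : m ≤ UF.card := by
      rw [hmdef, Nat.ceil_le, hUFcard, htdef,
        div_le_iff₀ (mul_pos (mul_pos (by norm_num) hlam0) hL0)]
      have hlamL : (1:ℝ) ≤ lam * L := by
        have := mul_le_mul hlam hL1 zero_le_one (by linarith : (0:ℝ) ≤ lam)
        linarith
      have h5 : ε * (U.ncard : ℝ) ≤ (U.ncard : ℝ) := by
        have := mul_le_mul_of_nonneg_right hε1.le (by linarith : (0:ℝ) ≤ (U.ncard : ℝ))
        linarith
      have h2 : (U.ncard : ℝ) * 1 ≤ (U.ncard : ℝ) * (3 * lam * L) :=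
        mul_le_mul_of_nonneg_left (by linarith) (by linarith)
      linarith
    have hS'le : S'.card ≤ m := by
      have h := hcase.le.trans (Nat.le_ceil t)
      exact_mod_cast h
    obtain ⟨S'', hsub2, hsub3, hcard2⟩ :=
      Finset.exists_subsuperset_card_eq hS'UF hS'le hmle
    have hS''U : (↑S'' : Set (Fin n)) ⊆ U := by
      rw [← hUFcoe]; exact_mod_cast hsub3
    have hBex : (B.ncard : ℝ) ≤ ((extNbhd G ↑S'').ncard : ℝ) := by
      have hsb : B ⊆ extNbhd G ↑S'' := by
        rintro v ⟨⟨hvS, x, hxS, hadj⟩, hvU⟩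
        exact ⟨fun h => hvU (hS''U h), x, hsub2 hxS, hadj⟩
      exact_mod_cast Set.ncard_le_ncard hsb (Set.toFinite _)
    have hmlt : (m : ℝ) < 3 * t := by
      have hc := Nat.ceil_lt_add_one (le_of_lt (lt_trans one_pos ht1))
      rw [← hmdef] at hc
      linarith
    refine ⟨↑S'', hS''U, ?_, ?_⟩
    · rw [Set.ncard_coe_finset, hcard2]
      have h3t : 3 * lam * t ≤ ((extNbhd G ↑S'').ncard : ℝ) := by
        rw [← ht3]; exact le_trans hBexp hBex
      have hml := mul_le_mul_of_nonneg_left hmlt.le hlam0.le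
      linarith
    · rw [Set.ncard_coe_finset, hcard2]
      exact Nat.le_ceil t
end

section
/- Let n and s be sufficiently large and let 0 < p, ε < 1. Suppose that G is an n-vertex (ε,s)-expander and εps ≥ 10^5·(log n)^3. Let H be the random subgraph of G with vertex set V(G) that contains each edge of G independently with probability p, and let s' = εps/(10^4·(log n)^2). Then the probability that H is not an (ε/4, s')-expander is less than 2/n. -/
/-- The probability of the event `E` for the random spanning subgraph of `G` which keeps
each edge of `G` independently with probability `p`. -/
noncomputable def edgeSubgraphProb (n : ℕ) (G : SimpleGraph (Fin n)) (p : ℝ)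
    (E : Set (SimpleGraph (Fin n))) : ℝ :=
  ∑ F : Finset (Sym2 (Fin n)),
    {F : Finset (Sym2 (Fin n)) | (↑F : Set (Sym2 (Fin n))) ⊆ G.edgeSet ∧
        SimpleGraph.fromEdgeSet (↑F : Set (Sym2 (Fin n))) ∈ E}.indicator
      (fun F => p ^ F.card * (1 - p) ^ (G.edgeSet.ncard - F.card)) F

/-!
Fix a vertex set `U`. Applying the expansion of `G` to `U` over and over, each time deleting the
edges already used, produces disjoint fans `D v` of `G`-edges from `U` to outside vertices `v`:
about `s/4` rounds, each adding one edge to each of `q ≈ ε|U|/log²n` fans. If the random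
subgraph `H` keeps fewer than `ε|U|/(4 log²n)` external neighbours of `U` after deleting a set `F`
of at most `s'|U|` edges, then `Z = ∑ v, min |H ∩ D v| M` is small, because a fan meeting `H \ F`
yields a neighbour and the other fans are covered by `F`. Since the fans are disjoint, `Z` is a
sum of independent truncated binomial variables, and an exponential Markov bound makes this
failure have probability at most `exp(-20|U| log n)`, which survives a union bound over `U`.
-/

open Finset Function Real

section SubsetWeight

variable {α : Type*}

/-- The probability that a `p`-random subset of `A` equals `R`. -/
def subsetWeight (p : ℝ) (A R : Finset α) : ℝ :=
  p ^ R.card * (1 - p) ^ (A.card - R.card)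

variable {p : ℝ}

lemma subsetWeight_nonneg (hp0 : 0 ≤ p) (hp1 : p ≤ 1) (A R : Finset α) :
    0 ≤ subsetWeight p A R :=
  mul_nonneg (pow_nonneg hp0 _) (pow_nonneg (sub_nonneg.2 hp1) _)

lemma sum_subsetWeight_mul_pow (p x : ℝ) (A : Finset α) :
    ∑ R ∈ A.powerset, subsetWeight p A R * x ^ R.card = (p * x + (1 - p)) ^ A.card := by
  rw [← sum_pow_mul_eq_add_pow]
  exact sum_congr rfl fun R _ => by rw [subsetWeight, mul_pow]; ring

lemma sum_subsetWeight (p : ℝ) (A : Finset α) : ∑ R ∈ A.powerset, subsetWeight p A R = 1 := by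
  simpa using sum_subsetWeight_mul_pow p 1 A

variable [DecidableEq α]

lemma sum_powerset_union_of_disjoint {B C : Finset α} (h : Disjoint B C) (g : Finset α → ℝ) :
    ∑ R ∈ (B ∪ C).powerset, g R = ∑ S ∈ B.powerset, ∑ T ∈ C.powerset, g (S ∪ T) := by
  rw [← sum_product' (s := B.powerset) (t := C.powerset) (f := fun S T => g (S ∪ T))]
  refine (sum_nbij' (fun P : Finset α × Finset α => P.1 ∪ P.2) (fun R => (R ∩ B, R ∩ C))
    ?_ ?_ ?_ ?_ fun _ _ => rfl).symm
  · simp only [mem_product, mem_powerset]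
    exact fun P hP => union_subset_union hP.1 hP.2
  · simp
  · simp only [mem_product, mem_powerset, Prod.ext_iff]
    intro P hP
    have hBC := disjoint_left.1 h
    constructor <;> ext x <;> simp only [mem_inter, mem_union] <;> grind
  · simp only [mem_powerset, ← inter_union_distrib_left]
    exact fun R hR => inter_eq_left.2 hR

lemma subsetWeight_union {B C S T : Finset α} (h : Disjoint B C) (hS : S ⊆ B) (hT : T ⊆ C) :
    subsetWeight p (B ∪ C) (S ∪ T) = subsetWeight p B S * subsetWeight p C T := by
  have hS' := card_le_card hS
  have hT' := card_le_card hT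
  rw [subsetWeight, subsetWeight, subsetWeight, card_union_of_disjoint h,
    card_union_of_disjoint (h.mono hS hT),
    show B.card + C.card - (S.card + T.card) = (B.card - S.card) + (C.card - T.card) by omega]
  ring

/-- Independence of a `p`-random subset on disjoint blocks. -/
lemma sum_subsetWeight_mul_prod_inter {ι : Type*} [DecidableEq ι] (s : Finset ι)
    {A : Finset α} {D : ι → Finset α} (hDA : ∀ i ∈ s, D i ⊆ A)
    (hD : (s : Set ι).PairwiseDisjoint D) (h : ι → Finset α → ℝ) :
    ∑ R ∈ A.powerset, subsetWeight p A R * ∏ i ∈ s, h i (R ∩ D i)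
      = ∏ i ∈ s, ∑ S ∈ (D i).powerset, subsetWeight p (D i) S * h i S := by
  induction s using Finset.induction_on generalizing A with
  | empty => simp [sum_subsetWeight]
  | @insert j s hj ih =>
    have hDj : D j ⊆ A := hDA j (mem_insert_self j s)
    have hdisj : Disjoint (D j) (A \ D j) := disjoint_sdiff
    have hDi : ∀ i ∈ s, Disjoint (D j) (D i) := fun i hi =>
      hD (mem_insert_self j s) (mem_insert_of_mem hi) (ne_of_mem_of_not_mem hi hj).symm
    rw [prod_insert hj, ← ih (A := A \ D j) (fun i hi => subset_sdiff.2
        ⟨hDA i (mem_insert_of_mem hi), (hDi i hi).symm⟩) (hD.subset (by simp)),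
      sum_mul_sum, ← union_sdiff_of_subset hDj, sum_powerset_union_of_disjoint hdisj,
      union_sdiff_of_subset hDj]
    refine sum_congr rfl fun S hS => sum_congr rfl fun T hT => ?_
    rw [mem_powerset] at hS hT
    have hSj : (S ∪ T) ∩ D j = S := by
      rw [union_inter_distrib_right, inter_eq_left.2 hS,
        disjoint_iff_inter_eq_empty.1 (disjoint_sdiff_self_left.mono_left hT), union_empty]
    have hSi : ∀ i ∈ s, (S ∪ T) ∩ D i = T ∩ D i := fun i hi => by
      rw [union_inter_distrib_right,
        disjoint_iff_inter_eq_empty.1 ((hDi i hi).mono_left hS), empty_union]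
    have hw := subsetWeight_union (p := p) hdisj hS hT
    rw [union_sdiff_of_subset hDj] at hw
    rw [prod_insert hj, hSj, prod_congr rfl fun i hi => congrArg (h i) (hSi i hi), hw]
    ring

end SubsetWeight

section TruncatedBinomial

variable {α : Type*} {p : ℝ}

lemma mul_exp_neg_one_div_eight_add_one_sub_le (hp : 0 ≤ p) :
    p * exp (-1 / 8) + (1 - p) ≤ exp (-p / 9) := by
  have h : exp (-1 / 8) ≤ 8 / 9 := by
    rw [neg_div, exp_neg, inv_le_comm₀ (exp_pos _) (by norm_num)]
    linarith [add_one_le_exp (1 / 8 : ℝ)]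
  linarith [add_one_le_exp (-p / 9), mul_le_mul_of_nonneg_left h hp]

lemma exp_neg_min_div_le (t M : ℝ) : exp (-min t M / 8) ≤ exp (-t / 8) + exp (-M / 8) := by
  rcases min_cases t M with ⟨h, -⟩ | ⟨h, -⟩ <;> rw [h] <;>
    linarith [exp_pos (-t / 8), exp_pos (-M / 8)]

lemma sum_subsetWeight_mul_exp_neg_min_le (hp0 : 0 ≤ p) (hp1 : p ≤ 1) (D : Finset α) (M : ℝ) :
    ∑ S ∈ D.powerset, subsetWeight p D S * exp (-min (S.card : ℝ) M / 8)
      ≤ exp (-min (p * D.card) M / 9 + exp (-M / 72)) := by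
  set μ := min (p * D.card) M
  have hbinom : ∑ S ∈ D.powerset, subsetWeight p D S * exp (-(S.card : ℝ) / 8)
      ≤ exp (-μ / 9) := calc
    _ = (p * exp (-1 / 8) + (1 - p)) ^ D.card := by
      rw [← sum_subsetWeight_mul_pow]
      refine sum_congr rfl fun S _ => ?_
      rw [← exp_nat_mul]
      ring_nf
    _ ≤ exp (-p / 9) ^ D.card :=
      pow_le_pow_left₀ (by linarith [mul_nonneg hp0 (exp_pos (-1 / 8)).le])
        (mul_exp_neg_one_div_eight_add_one_sub_le hp0) _
    _ = exp (-(p * D.card) / 9) := by rw [← exp_nat_mul]; ring_nf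
    _ ≤ exp (-μ / 9) := exp_le_exp.2 (by linarith [min_le_left (p * D.card) M])
  have htail : exp (-M / 8) ≤ exp (-μ / 9) * exp (-M / 72) := by
    rw [← exp_add]
    exact exp_le_exp.2 (by linarith [min_le_right (p * D.card) M])
  calc ∑ S ∈ D.powerset, subsetWeight p D S * exp (-min (S.card : ℝ) M / 8)
      ≤ ∑ S ∈ D.powerset, (subsetWeight p D S * exp (-(S.card : ℝ) / 8)
          + subsetWeight p D S * exp (-M / 8)) :=
        sum_le_sum fun S _ => by
          rw [← mul_add]
          exact mul_le_mul_of_nonneg_left (exp_neg_min_div_le _ _)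
            (subsetWeight_nonneg hp0 hp1 D S)
    _ ≤ exp (-μ / 9) + exp (-μ / 9) * exp (-M / 72) := by
      rw [sum_add_distrib, ← sum_mul, sum_subsetWeight, one_mul]
      exact add_le_add hbinom htail
    _ ≤ exp (-μ / 9 + exp (-M / 72)) := by
      rw [exp_add, ← mul_one_add, add_comm 1]
      exact mul_le_mul_of_nonneg_left (add_one_le_exp _) (exp_pos _).le

/-- Exponential Markov inequality for a sum of truncated binomial variables on disjoint blocks. -/
lemma sum_subsetWeight_ite_sum_min_lt_le {ι : Type*} [DecidableEq α] [Fintype ι]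
    [DecidableEq ι] (hp0 : 0 ≤ p) (hp1 : p ≤ 1) {A : Finset α} {D : ι → Finset α}
    (hDA : ∀ i, D i ⊆ A) (hD : Pairwise (Disjoint on D)) (M z : ℝ) :
    ∑ R ∈ A.powerset,
        (if ∑ i, min ((R ∩ D i).card : ℝ) M < z then subsetWeight p A R else 0)
      ≤ exp (z / 8 - (∑ i, min (p * (D i).card) M) / 9 + Fintype.card ι * exp (-M / 72)) := by
  calc ∑ R ∈ A.powerset,
        (if ∑ i, min ((R ∩ D i).card : ℝ) M < z then subsetWeight p A R else 0)
      ≤ ∑ R ∈ A.powerset,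
          subsetWeight p A R * exp ((z - ∑ i, min ((R ∩ D i).card : ℝ) M) / 8) := by
        refine sum_le_sum fun R _ => ?_
        have hw := subsetWeight_nonneg hp0 hp1 A R
        split_ifs with hlt
        · exact le_mul_of_one_le_right hw (one_le_exp (by linarith))
        · positivity
    _ = exp (z / 8) * ∑ R ∈ A.powerset,
          subsetWeight p A R * ∏ i, exp (-min ((R ∩ D i).card : ℝ) M / 8) := by
        rw [mul_sum]
        refine sum_congr rfl fun R _ => ?_
        rw [← exp_sum, mul_left_comm, ← exp_add, sub_div, sum_div]
        simp only [neg_div, sum_neg_distrib, sub_eq_add_neg]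
    _ = exp (z / 8) * ∏ i, ∑ S ∈ (D i).powerset,
          subsetWeight p (D i) S * exp (-min (S.card : ℝ) M / 8) := by
        rw [sum_subsetWeight_mul_prod_inter univ (fun i _ => hDA i) (fun i _ j _ hij => hD hij)
          fun _ S => exp (-min (S.card : ℝ) M / 8)]
    _ ≤ exp (z / 8) * ∏ i, exp (-min (p * (D i).card) M / 9 + exp (-M / 72)) := by
        gcongr with i
        · exact fun i _ => sum_nonneg fun S _ =>
            mul_nonneg (subsetWeight_nonneg hp0 hp1 _ _) (exp_pos _).le
        · exact sum_subsetWeight_mul_exp_neg_min_le hp0 hp1 (D i) M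
    _ = exp (z / 8 - (∑ i, min (p * (D i).card) M) / 9 + Fintype.card ι * exp (-M / 72)) := by
        rw [← exp_sum, ← exp_add, sum_add_distrib, sum_const, card_univ, nsmul_eq_mul, sum_div]
        simp only [neg_div, sum_neg_distrib, sub_eq_add_neg, add_assoc]

end TruncatedBinomial

lemma mul_le_sum_min {ι : Type*} (t : Finset ι) {m : ι → ℝ} {I q p M : ℝ} (hI : 0 < I)
    (hM0 : 0 ≤ M) (hM : M ≤ p * I) (hm0 : ∀ i ∈ t, 0 ≤ m i) (hmI : ∀ i ∈ t, m i ≤ I)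
    (hsum : ∑ i ∈ t, m i = I * q) :
    q * M ≤ ∑ i ∈ t, min (p * m i) M := by
  have hpoint : ∀ i ∈ t, M * m i ≤ I * min (p * m i) M := by
    intro i hi
    rcases min_cases (p * m i) M with ⟨h, -⟩ | ⟨h, -⟩ <;> rw [h]
    · nlinarith [hm0 i hi]
    · nlinarith [hmI i hi]
  have := sum_le_sum hpoint
  rw [← mul_sum, ← mul_sum, hsum] at this
  nlinarith

section Fans

variable {α : Type*} {G : SimpleGraph α} {U : Set α} {D : α → Finset (Sym2 α)}

def IsFanFamily (G : SimpleGraph α) (U : Set α) (D : α → Finset (Sym2 α)) : Prop :=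
  ∀ v, ∀ e ∈ D v, v ∉ U ∧ e ∈ G.edgeSet ∧ ∃ u ∈ U, e = s(u, v)

lemma IsFanFamily.pairwise_disjoint (hD : IsFanFamily G U D) : Pairwise (Disjoint on D) := by
  intro v w hvw
  refine disjoint_left.2 fun e hev hew => ?_
  obtain ⟨hvU, -, u, hu, rfl⟩ := hD v e hev
  obtain ⟨-, -, u', hu', he⟩ := hD w _ hew
  rcases Sym2.eq_iff.1 he with ⟨-, rfl⟩ | ⟨-, rfl⟩
  · exact hvw rfl
  · exact hvU hu'

variable [Fintype α] [DecidableEq α]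

lemma IsFanFamily.biUnion_subset_edgeSet (hD : IsFanFamily G U D) :
    (↑(univ.biUnion D) : Set (Sym2 α)) ⊆ G.edgeSet := by
  intro e he
  obtain ⟨v, -, hev⟩ := mem_biUnion.1 he
  exact (hD v e hev).2.1

lemma IsFanFamily.card_biUnion (hD : IsFanFamily G U D) :
    (univ.biUnion D).card = ∑ v, (D v).card :=
  Finset.card_biUnion fun _ _ _ _ hvw => hD.pairwise_disjoint hvw

lemma IsFanFamily.exists_extend (hD : IsFanFamily G U D) {q : ℕ}
    (hq : q ≤ (extNbhd (G.deleteEdges ↑(univ.biUnion D)) U).ncard) :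
    ∃ D', IsFanFamily G U D' ∧ (∀ v, (D' v).card ≤ (D v).card + 1) ∧
      ∑ v, (D' v).card = ∑ v, (D v).card + q := by
  classical
  set N := extNbhd (G.deleteEdges ↑(univ.biUnion D)) U
  rw [Set.ncard_eq_toFinset_card' N] at hq
  obtain ⟨W, hWN, rfl⟩ := exists_subset_card_eq hq
  have hnew : ∀ v, ∃ e, v ∈ W →
      e ∉ univ.biUnion D ∧ e ∈ G.edgeSet ∧ ∃ u ∈ U, e = s(u, v) := by
    intro v
    by_cases hv : v ∈ W
    · obtain ⟨-, u, hu, hadj⟩ := Set.mem_toFinset.1 (hWN hv)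
      rw [SimpleGraph.deleteEdges_adj] at hadj
      exact ⟨s(u, v), fun _ => ⟨hadj.2, hadj.1, u, hu, rfl⟩⟩
    · exact ⟨s(v, v), fun h => absurd h hv⟩
  choose f hf using hnew
  have hcard : ∀ v, (if v ∈ W then insert (f v) (D v) else D v).card
      = (D v).card + if v ∈ W then 1 else 0 := by
    intro v
    split_ifs with hv
    · exact card_insert_of_notMem fun h => (hf v hv).1 (mem_biUnion.2 ⟨v, mem_univ v, h⟩)
    · rfl
  refine ⟨fun v => if v ∈ W then insert (f v) (D v) else D v, ?_, fun v => ?_, ?_⟩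
  · intro v e he
    dsimp only at he
    split_ifs at he with hv
    · rcases mem_insert.1 he with rfl | he
      · exact ⟨(Set.mem_toFinset.1 (hWN hv)).1, (hf v hv).2⟩
      · exact hD v e he
    · exact hD v e he
  · rw [hcard]
    split_ifs <;> omega
  · simp only [hcard, sum_add_distrib, sum_boole, filter_mem_eq_inter, univ_inter,
      Nat.cast_id]

/-- Built in `I` rounds: the fans so far have at most `I * q ≤ s |U|` edges, so after deleting
them `G` still gives `U` at least `q` external neighbours, and each of them gets one more edge. -/
lemma IsExpander.exists_fanFamily {n : ℕ} {ε s : ℝ} (hG : IsExpander n G ε s)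
    (hU1 : 1 ≤ U.ncard) (hU2 : (U.ncard : ℝ) ≤ 2 / 3 * n) {I q : ℕ}
    (hq : q ≤ ⌈ε * U.ncard / logb 2 n ^ 2⌉₊) (hIq : (I * q : ℝ) ≤ s * U.ncard) :
    ∃ D, IsFanFamily G U D ∧ (∀ v, (D v).card ≤ I) ∧ ∑ v, (D v).card = I * q := by
  suffices ∀ j ≤ I, ∃ D, IsFanFamily G U D ∧ (∀ v, (D v).card ≤ j) ∧ ∑ v, (D v).card = j * q
    from this I le_rfl
  intro j hj
  induction j with
  | zero => exact ⟨fun _ => ∅, by simp [IsFanFamily], by simp, by simp⟩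
  | succ j ih =>
    obtain ⟨D, hD, hDj, hDsum⟩ := ih (by omega)
    have hdel : (((univ.biUnion D : Finset (Sym2 α)) : Set (Sym2 α)).ncard : ℝ)
        ≤ s * U.ncard := by
      rw [Set.ncard_coe_finset, hD.card_biUnion, hDsum]
      refine le_trans ?_ hIq
      push_cast
      gcongr
      exact_mod_cast (by omega : j ≤ I)
    have hN := hG U _ hD.biUnion_subset_edgeSet hU1 hU2 hdel
    obtain ⟨D', hD', hD'j, hD'sum⟩ := hD.exists_extend (hq.trans (Nat.ceil_le.2 hN))
    exact ⟨D', hD', fun v => (hD'j v).trans (by have := hDj v; omega), by rw [hD'sum, hDsum]; ring⟩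

lemma exists_fan_dimensions {x k s : ℝ} (hx : 0 < x) (hxk : x ≤ k) (hk : 1 ≤ k) (hs : 4 ≤ s) :
    ∃ I q : ℕ, q ≤ ⌈x⌉₊ ∧ x ≤ q ∧ (I * q : ℝ) ≤ s * k ∧ s / 4 ≤ I := by
  have hq0 : (0 : ℝ) < ⌈x⌉₊ := by exact_mod_cast Nat.ceil_pos.2 hx
  have hqk : (⌈x⌉₊ : ℝ) ≤ 2 * k := by linarith [Nat.ceil_lt_add_one hx.le]
  have hy : s / 2 ≤ s * k / ⌈x⌉₊ := by
    rw [le_div_iff₀ hq0]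
    nlinarith
  refine ⟨⌊s * k / ⌈x⌉₊⌋₊, ⌈x⌉₊, le_rfl, Nat.le_ceil x, ?_, ?_⟩
  · calc (⌊s * k / ⌈x⌉₊⌋₊ * ⌈x⌉₊ : ℝ) ≤ s * k / ⌈x⌉₊ * ⌈x⌉₊ := by
          gcongr
          exact Nat.floor_le (by linarith)
      _ = s * k := div_mul_cancel₀ _ hq0.ne'
  · linarith [Nat.sub_one_lt_floor (s * k / ⌈x⌉₊)]

lemma IsExpander.exists_fanFamily_mul_le_sum_min {n : ℕ} {ε s p M : ℝ}
    (hG : IsExpander n G ε s) (hU1 : 1 ≤ U.ncard) (hU2 : (U.ncard : ℝ) ≤ 2 / 3 * n)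
    (hε0 : 0 < ε) (hε1 : ε ≤ 1) (hL : 1 ≤ logb 2 n) (hs : 4 ≤ s) (hp : 0 ≤ p) (hM0 : 0 ≤ M)
    (hM : M ≤ p * s / 4) :
    ∃ D, IsFanFamily G U D ∧ ε * U.ncard / logb 2 n ^ 2 * M ≤ ∑ v, min (p * (D v).card) M := by
  have hk : (1 : ℝ) ≤ U.ncard := Nat.one_le_cast.2 hU1
  have hL2 : 1 ≤ logb 2 n ^ 2 := one_le_pow₀ hL
  obtain ⟨I, q, hqx, hxq, hIq, hIs⟩ :=
    exists_fan_dimensions (x := ε * U.ncard / logb 2 n ^ 2) (k := U.ncard) (by positivity)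
    (div_le_of_le_mul₀ (by positivity) (by positivity) (by nlinarith)) hk hs
  obtain ⟨D, hD, hDI, hDsum⟩ := hG.exists_fanFamily hU1 hU2 hqx hIq
  refine ⟨D, hD, le_trans (by gcongr) (mul_le_sum_min (I := I) (q := q) (p := p) univ
    (by linarith) hM0 ?_ (fun _ _ => Nat.cast_nonneg _) (fun v _ => by exact_mod_cast hDI v)
    (by exact_mod_cast hDsum))⟩
  nlinarith [mul_le_mul_of_nonneg_left hIs hp]

lemma IsFanFamily.sum_card_inter_le (hD : IsFanFamily G U D) (F : Finset (Sym2 α)) :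
    ∑ v, (F ∩ D v).card ≤ F.card := by
  rw [← Finset.card_biUnion fun _ _ _ _ hvw =>
    (hD.pairwise_disjoint hvw).mono inter_subset_right inter_subset_right]
  exact card_le_card (biUnion_subset.2 fun _ _ => inter_subset_left)

/-- A fan meeting `R \ F` contributes an external neighbour of `U`; the other fans meet `R`
only inside `F`. -/
lemma IsFanFamily.sum_min_card_inter_lt (hD : IsFanFamily G U D) {M b : ℝ} (hM : 0 < M)
    {R : Finset (Sym2 α)} {F : Set (Sym2 α)}
    (hN : ((extNbhd ((SimpleGraph.fromEdgeSet ↑R).deleteEdges F) U).ncard : ℝ) < b) :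
    ∑ v, min ((R ∩ D v).card : ℝ) M < M * b + F.ncard := by
  classical
  set N := extNbhd ((SimpleGraph.fromEdgeSet ↑R).deleteEdges F) U
  set T := univ.filter fun v => ((R \ F.toFinset) ∩ D v).Nonempty
  have hTN : (T.card : ℝ) ≤ N.ncard := by
    suffices (↑T : Set α) ⊆ N by exact_mod_cast Set.ncard_coe_finset T ▸ Set.ncard_le_ncard this
    intro v hv
    obtain ⟨e, he⟩ := (mem_filter.1 hv).2
    simp only [mem_inter, mem_sdiff, Set.mem_toFinset] at he
    obtain ⟨⟨heR, heF⟩, heD⟩ := he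
    obtain ⟨hvU, -, u, hu, rfl⟩ := hD v _ heD
    refine ⟨hvU, u, hu, ?_⟩
    simp only [SimpleGraph.deleteEdges_adj, SimpleGraph.fromEdgeSet_adj]
    exact ⟨⟨heR, fun h => hvU (h ▸ hu)⟩, heF⟩
  have hpoint : ∀ v, min ((R ∩ D v).card : ℝ) M
      ≤ (if v ∈ T then M else 0) + (F.toFinset ∩ D v).card := by
    intro v
    split_ifs with hv
    · exact le_add_of_le_of_nonneg (min_le_right _ _) (Nat.cast_nonneg _)
    · have hsub : R ∩ D v ⊆ F.toFinset ∩ D v := by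
        intro e he
        by_contra hF
        exact hv (mem_filter.2 ⟨mem_univ v, e, by simp_all⟩)
      rw [zero_add]
      exact (min_le_left _ _).trans (by exact_mod_cast card_le_card hsub)
  have hF : ∑ v, ((F.toFinset ∩ D v).card : ℝ) ≤ F.ncard := by
    rw [Set.ncard_eq_toFinset_card']
    exact_mod_cast hD.sum_card_inter_le F.toFinset
  calc ∑ v, min ((R ∩ D v).card : ℝ) M
      ≤ ∑ v, ((if v ∈ T then M else 0) + (F.toFinset ∩ D v).card) := sum_le_sum fun v _ => hpoint v
    _ = T.card * M + ∑ v, ((F.toFinset ∩ D v).card : ℝ) := by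
      rw [sum_add_distrib, sum_ite_mem, univ_inter, sum_const, nsmul_eq_mul]
    _ < M * b + F.ncard := by nlinarith

end Fans

lemma natCast_le_exp_logb_two (n : ℕ) : (n : ℝ) ≤ exp (logb 2 n) := by
  rcases Nat.eq_zero_or_pos n with rfl | hn
  · simp
  have hlog : log n ≤ logb 2 n := by
    rw [logb, le_div_iff₀ (log_pos one_lt_two)]
    exact mul_le_of_le_one_right (log_natCast_nonneg n) (by linarith [log_two_lt_d9])
  calc (n : ℝ) = exp (log n) := (exp_log (by exact_mod_cast hn)).symm
    _ ≤ exp (logb 2 n) := exp_le_exp.2 hlog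

lemma natCast_mul_exp_neg_le_one {n : ℕ} {M : ℝ} (hM : 72 * logb 2 n ≤ M) :
    n * exp (-M / 72) ≤ 1 := by
  calc n * exp (-M / 72) ≤ exp (logb 2 n) * exp (-M / 72) := by
        gcongr
        exact natCast_le_exp_logb_two n
    _ = exp (logb 2 n - M / 72) := by rw [← exp_add]; ring_nf
    _ ≤ 1 := exp_le_one_iff.2 (by linarith)

def FailsToExpand {α : Type*} (n : ℕ) (H : SimpleGraph α) (ε s : ℝ) (U : Set α) : Prop :=
  ∃ F ⊆ H.edgeSet, (F.ncard : ℝ) ≤ s * U.ncard ∧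
    ((extNbhd (H.deleteEdges F) U).ncard : ℝ) < ε * U.ncard / logb 2 n ^ 2

lemma exists_failsToExpand_of_not_isExpander {α : Type*} {n : ℕ} {H : SimpleGraph α} {ε s : ℝ}
    (h : ¬ IsExpander n H ε s) :
    ∃ U : Set α, 1 ≤ U.ncard ∧ (U.ncard : ℝ) ≤ 2 / 3 * n ∧ FailsToExpand n H ε s U := by
  simp only [IsExpander, not_forall, not_le] at h
  obtain ⟨U, F, hF, hU1, hU2, hFU, hN⟩ := h
  exact ⟨U, hU1, hU2, F, hF, hFU, hN⟩

open scoped Classical in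
lemma sum_subsetWeight_failsToExpand_le {n : ℕ} {G : SimpleGraph (Fin n)} [DecidableRel G.Adj]
    {p ε s : ℝ} (hG : IsExpander n G ε s) (hp0 : 0 < p) (hp1 : p ≤ 1) (hε0 : 0 < ε)
    (hε1 : ε ≤ 1) (hL : 1 ≤ logb 2 n) (hps : 10 ^ 5 * logb 2 n ^ 3 ≤ ε * p * s)
    {U : Set (Fin n)} (hU1 : 1 ≤ U.ncard) (hU2 : (U.ncard : ℝ) ≤ 2 / 3 * n) :
    ∑ R ∈ G.edgeFinset.powerset,
        (if FailsToExpand n (SimpleGraph.fromEdgeSet ↑R) (ε / 4)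
            (ε * p * s / (10 ^ 4 * logb 2 n ^ 2)) U
          then subsetWeight p G.edgeFinset R else 0)
      ≤ exp (-(20 * U.ncard * logb 2 n)) := by
  set L := logb 2 n
  set k : ℝ := (U.ncard : ℝ)
  set x := ε * k / L ^ 2
  set M := p * s / 100
  have hk : 1 ≤ k := Nat.one_le_cast.2 hU1
  have hL3 : 1 ≤ L ^ 3 := one_le_pow₀ hL
  have hps0 : 0 < p * s := pos_of_mul_pos_right (a := ε) (by rw [← mul_assoc]; linarith) hε0.le
  have hps' : 10 ^ 5 * L ^ 3 ≤ p * s :=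
    hps.trans (by rw [mul_assoc]; exact mul_le_of_le_one_left hps0.le hε1)
  have hM : 0 < M := by positivity
  obtain ⟨D, hD, hA⟩ := hG.exists_fanFamily_mul_le_sum_min hU1 hU2 hε0 hε1 hL (by nlinarith)
    hp0.le hM.le (by simp only [M]; linarith)
  set z := M * (ε / 4 * k / L ^ 2) + ε * p * s / (10 ^ 4 * L ^ 2) * k
  have hxM : 1000 * (L * k) ≤ x * M := by
    rw [show x * M = ε * p * s * k / (100 * L ^ 2) by simp only [x, M]; field_simp,
      le_div_iff₀ (by positivity)]
    nlinarith
  have hz : z = x * M * (1 / 4 + 1 / 100) := by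
    simp only [z, x, M]
    field_simp
    ring
  have hML : 72 * L ≤ M := by simp only [M]; nlinarith [one_le_pow₀ (n := 2) hL]
  have hn : n * exp (-M / 72) ≤ 1 := natCast_mul_exp_neg_le_one hML
  calc _ ≤ ∑ R ∈ G.edgeFinset.powerset,
        (if ∑ v, min ((R ∩ D v).card : ℝ) M < z then subsetWeight p G.edgeFinset R else 0) := by
        refine sum_le_sum fun R _ => ?_
        split_ifs with hfail hlt <;> try exact le_rfl
        · obtain ⟨F, -, hF, hN⟩ := hfail
          exact absurd ((hD.sum_min_card_inter_lt hM hN).trans_le (add_le_add_right hF _)) hlt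
        · exact subsetWeight_nonneg hp0.le hp1 _ _
    _ ≤ exp (z / 8 - (∑ v, min (p * (D v).card) M) / 9 + Fintype.card (Fin n) * exp (-M / 72)) :=
        sum_subsetWeight_ite_sum_min_lt_le hp0.le hp1
          (fun v e he => SimpleGraph.mem_edgeFinset.2 (hD v e he).2.1) hD.pairwise_disjoint M z
    _ ≤ exp (-(20 * k * L)) := by
        have hkL : 1 ≤ L * k := one_le_mul_of_one_le_of_one_le hL hk
        rw [Fintype.card_fin]
        exact exp_le_exp.2 (by linarith)

lemma sum_powerset_erase_empty_exp_neg_card_lt {α : Type*} [DecidableEq α] (A : Finset α)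
    (hA : 2 ≤ A.card) :
    ∑ U ∈ A.powerset.erase ∅, exp (-(20 * U.card * logb 2 A.card)) < 2 / A.card := by
  set n := A.card
  set y := exp (-(20 * logb 2 n))
  set t := n * y
  have hn : (2 : ℝ) ≤ n := by exact_mod_cast hA
  have hL : 0 < logb 2 n := logb_pos one_lt_two (by linarith)
  have ht0 : 0 ≤ t := by positivity
  have htn : t < 1 / n := by
    have hn2 : (n : ℝ) * n ≤ exp (2 * logb 2 n) := by
      rw [two_mul, exp_add]
      exact mul_le_mul (natCast_le_exp_logb_two n) (natCast_le_exp_logb_two n)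
        (Nat.cast_nonneg _) (exp_pos _).le
    rw [lt_div_iff₀ (by linarith)]
    calc t * n = n * n * y := by ring
      _ ≤ exp (2 * logb 2 n) * y := by gcongr
      _ = exp (-(18 * logb 2 n)) := by rw [← exp_add]; ring_nf
      _ < 1 := exp_lt_one_iff.2 (by linarith)
  have ht2 : t ≤ 1 / 2 := htn.le.trans (one_div_le_one_div_of_le two_pos hn)
  have hsum : ∑ U ∈ A.powerset, exp (-(20 * U.card * logb 2 n)) = (y + 1) ^ n := by
    rw [← sum_pow_mul_eq_add_pow]
    refine sum_congr rfl fun U _ => ?_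
    rw [one_pow, mul_one, ← exp_nat_mul]
    ring_nf
  calc ∑ U ∈ A.powerset.erase ∅, exp (-(20 * U.card * logb 2 n))
      = (y + 1) ^ n - 1 := by
        rw [sum_erase_eq_sub (empty_mem_powerset A), hsum, card_empty]
        simp
    _ ≤ exp t - 1 := by
        gcongr
        calc (y + 1) ^ n ≤ exp y ^ n := by gcongr; exact add_one_le_exp y
          _ = exp t := by rw [← exp_nat_mul]
    _ ≤ 2 * t := by
        have := exp_bound_div_one_sub_of_interval ht0 (by linarith)
        rw [le_div_iff₀ (by linarith)] at this
        nlinarith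
    _ < 2 / n := by rw [show (2 : ℝ) / n = 2 * (1 / n) by ring]; linarith

lemma sum_ite_exists_le_sum_sum {ι κ : Type*} (s : Finset ι) (t : Finset κ) (P : κ → ι → Prop)
    [∀ j i, Decidable (P j i)] [∀ i, Decidable (∃ j ∈ t, P j i)] {w : ι → ℝ}
    (hw : ∀ i ∈ s, 0 ≤ w i) :
    ∑ i ∈ s, (if ∃ j ∈ t, P j i then w i else 0) ≤ ∑ j ∈ t, ∑ i ∈ s, if P j i then w i else 0 := by
  rw [sum_comm]
  refine sum_le_sum fun i hi => ?_
  split_ifs with h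
  · obtain ⟨j, hj, hP⟩ := h
    refine le_trans ?_ (single_le_sum (fun j _ => ?_) hj)
    · rw [if_pos hP]
    · split_ifs <;> simp [hw i hi]
  · exact sum_nonneg fun j _ => by split_ifs <;> simp [hw i hi]

open scoped Classical in
lemma edgeSubgraphProb_eq_sum {n : ℕ} (G : SimpleGraph (Fin n)) (p : ℝ)
    (E : Set (SimpleGraph (Fin n))) :
    edgeSubgraphProb n G p E = ∑ R ∈ G.edgeFinset.powerset,
      if SimpleGraph.fromEdgeSet ↑R ∈ E then subsetWeight p G.edgeFinset R else 0 := by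
  have hcard : G.edgeSet.ncard = G.edgeFinset.card := by
    rw [← SimpleGraph.coe_edgeFinset, Set.ncard_coe_finset]
  have hsub : ∀ R : Finset (Sym2 (Fin n)), (↑R : Set (Sym2 (Fin n))) ⊆ G.edgeSet ↔
      R ∈ G.edgeFinset.powerset := by
    intro R
    rw [mem_powerset, ← SimpleGraph.coe_edgeFinset, coe_subset]
  rw [edgeSubgraphProb, ← sum_subset (subset_univ G.edgeFinset.powerset)]
  · refine sum_congr rfl fun R hR => ?_
    simp only [Set.indicator_apply, Set.mem_ofPred_eq, hsub, hR, true_and, subsetWeight, hcard]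
  · intro R _ hR
    simp only [Set.indicator_apply, Set.mem_ofPred_eq, hsub, hR, false_and, if_false]

open scoped Classical in
lemma edgeSubgraphProb_not_isExpander_le {n : ℕ} (G : SimpleGraph (Fin n)) {p : ℝ} (hp0 : 0 ≤ p)
    (hp1 : p ≤ 1) (ε s : ℝ) :
    edgeSubgraphProb n G p {H | ¬ IsExpander n H ε s}
      ≤ ∑ U ∈ ((univ : Finset (Fin n)).powerset.erase ∅).filter
            fun U => (U.card : ℝ) ≤ 2 / 3 * n,
          ∑ R ∈ G.edgeFinset.powerset,
            if FailsToExpand n (SimpleGraph.fromEdgeSet ↑R) ε s (U : Set (Fin n))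
            then subsetWeight p G.edgeFinset R else 0 := by
  rw [edgeSubgraphProb_eq_sum]
  refine le_trans (sum_le_sum fun R _ => ?_)
    (sum_ite_exists_le_sum_sum _ _ _ fun R _ => subsetWeight_nonneg hp0 hp1 _ R)
  split_ifs with hR hT hT <;> try exact le_rfl
  · obtain ⟨U, hU1, hU2, hfail⟩ := exists_failsToExpand_of_not_isExpander hR
    refine absurd ⟨U.toFinset, ?_, by rwa [Set.coe_toFinset]⟩ hT
    rw [Set.ncard_eq_toFinset_card'] at hU1 hU2
    exact mem_filter.2 ⟨mem_erase.2 ⟨nonempty_iff_ne_empty.1 (card_pos.1 hU1),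
      mem_powerset.2 (subset_univ _)⟩, hU2⟩
  · exact subsetWeight_nonneg hp0 hp1 _ R

/-- Keeping each edge of an `(ε,s)`-expander independently with probability `p` yields an
`(ε/4, εps/(10⁴(log n)²))`-expander with probability more than `1 - 2/n`. -/
theorem statement18 :
    ∃ N : ℕ, ∀ n : ℕ, N ≤ n → ∀ s : ℝ, (N : ℝ) ≤ s →
      ∀ p ε : ℝ, 0 < p → p < 1 → 0 < ε → ε < 1 →
        ∀ G : SimpleGraph (Fin n), IsExpander n G ε s →
          10 ^ 5 * Real.logb 2 n ^ 3 ≤ ε * p * s →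
          edgeSubgraphProb n G p
              {H : SimpleGraph (Fin n) |
                ¬ IsExpander n H (ε / 4) (ε * p * s / (10 ^ 4 * Real.logb 2 n ^ 2))}
            < 2 / n := by
  refine ⟨2, fun n hn s _ p ε hp0 hp1 hε0 hε1 G hG hps => ?_⟩
  classical
  have hL : 1 ≤ logb 2 n := by
    rw [le_logb_iff_rpow_le one_lt_two (by positivity)]
    exact_mod_cast (by simpa using hn : (2 : ℝ) ^ (1 : ℝ) ≤ n)
  calc _ ≤ _ := edgeSubgraphProb_not_isExpander_le G hp0.le hp1.le _ _
    _ ≤ ∑ U ∈ (univ.powerset.erase ∅).filter fun U => (U.card : ℝ) ≤ 2 / 3 * n,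
          exp (-(20 * U.card * logb 2 n)) := by
        refine sum_le_sum fun U hU => ?_
        obtain ⟨hU, hU2⟩ := mem_filter.1 hU
        have hU1 : 1 ≤ U.card := card_pos.2 (nonempty_iff_ne_empty.2 (mem_erase.1 hU).1)
        rw [← Set.ncard_coe_finset] at hU1 hU2 ⊢
        exact sum_subsetWeight_failsToExpand_le hG hp0 hp1.le hε0 hε1.le hL hps hU1 hU2
    _ ≤ ∑ U ∈ (univ : Finset (Fin n)).powerset.erase ∅, exp (-(20 * U.card * logb 2 n)) :=
        sum_le_sum_of_subset_of_nonneg (filter_subset _ _) fun _ _ _ => (exp_pos _).le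
    _ < 2 / n := by
        simpa using sum_powerset_erase_empty_exp_neg_card_lt (univ : Finset (Fin n)) (by simpa)
end
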